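/- arXiv:1304.1404 — 3 statements merged into one kernel-verified Lean document; each statement's English description precedes it below -/
import Mathlib

section
/- Let B be a complete Boolean algebra with operations c_i, s^i_j satisfying the SA axioms, where each s^i_j preserves arbitrary meets, and define d_ij = inf { y ∈ B : s^i_j y = 1 }. Then for i ≠ j: d_ij · c_i(d_ij · x) ≤ x for all x ∈ B (axiom C7 holds). -/
/-!
For a Boolean endomorphism `f` that is idempotent, `d = ⨅ {y | f y = ⊤}` lies below
`yᶜ ⊔ f y` for every `y` (this element is sent to `⊤`), so `d ⊓ y = d ⊓ f y`.
Since `s i j` is idempotent and its values are `c i`-closed when `i ≠ j`, monotonicity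
of `c i` gives `c i (d ⊓ x) ≤ c i (s i j x) = s i j x`, and hence
`d ⊓ c i (d ⊓ x) ≤ d ⊓ s i j x ≤ x`.
-/

section IdempotentBooleanEndomorphism

variable {B : Type*} [CompleteBooleanAlgebra B] {f : B → B}

theorem sInf_map_eq_top_inf_le_map (hsup : ∀ x y, f (x ⊔ y) = f x ⊔ f y)
    (hcompl : ∀ x, f xᶜ = (f x)ᶜ) (hidem : ∀ x, f (f x) = f x) (x : B) :
    sInf {y | f y = ⊤} ⊓ x ≤ f x := by
  have hmem : f (xᶜ ⊔ f x) = ⊤ := by rw [hsup, hcompl, hidem, compl_sup_eq_top]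
  calc sInf {y | f y = ⊤} ⊓ x ≤ (xᶜ ⊔ f x) ⊓ x := inf_le_inf_right x (sInf_le hmem)
    _ = f x ⊓ x := by rw [inf_sup_right, compl_inf_eq_bot, bot_sup_eq]
    _ ≤ f x := inf_le_left

theorem sInf_map_eq_top_inf_map_le (hsup : ∀ x y, f (x ⊔ y) = f x ⊔ f y)
    (hcompl : ∀ x, f xᶜ = (f x)ᶜ) (hidem : ∀ x, f (f x) = f x) (x : B) :
    sInf {y | f y = ⊤} ⊓ f x ≤ x := by
  have h := sInf_map_eq_top_inf_le_map hsup hcompl hidem xᶜ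
  rwa [hcompl, le_compl_iff_disjoint_right, disjoint_iff, inf_right_comm, ← disjoint_iff,
    disjoint_compl_right_iff] at h

end IdempotentBooleanEndomorphism

theorem stmt10_general {B : Type*} [CompleteBooleanAlgebra B] {ι : Type*}
    (c : ι → B → B) (s : ι → ι → B → B)
    (hS2 : ∀ i x y, c i (x ⊔ y) = c i x ⊔ c i y)
    (hS3 : ∀ i j x, s i j (c i x) = c i x)
    (hS4 : ∀ i j x, i ≠ j → c i (s i j x) = s i j x)
    (hS6sup : ∀ i j x y, s i j (x ⊔ y) = s i j x ⊔ s i j y)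
    (hS6compl : ∀ i j x, s i j (xᶜ) = (s i j x)ᶜ) :
    ∀ (i j : ι) (x : B), i ≠ j →
      sInf {y : B | s i j y = ⊤} ⊓ c i (sInf {y : B | s i j y = ⊤} ⊓ x) ≤ x := by
  intro i j x hij
  set d := sInf {y : B | s i j y = ⊤}
  have hidem : ∀ y, s i j (s i j y) = s i j y := fun y => by
    rw [← hS4 i j y hij, hS3, hS4 i j y hij]
  have hc : c i (d ⊓ x) ≤ s i j x :=
    hS4 i j x hij ▸ Monotone.of_map_sup (hS2 i)
      (sInf_map_eq_top_inf_le_map (hS6sup i j) (hS6compl i j) hidem x)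
  calc d ⊓ c i (d ⊓ x) ≤ d ⊓ s i j x := inf_le_inf_left d hc
    _ ≤ x := sInf_map_eq_top_inf_map_le (hS6sup i j) (hS6compl i j) hidem x

/-- Under the SA axioms on a complete Boolean algebra, with the
substitutions preserving arbitrary meets, and `d i j := sInf {y | s i j y = ⊤}`,
for `i ≠ j`, axiom (C7) holds: `d i j ⊓ c i (d i j ⊓ x) ≤ x`. -/
theorem stmt10 {B : Type*} [CompleteBooleanAlgebra B] {ι : Type*}
    (c : ι → B → B) (s : ι → ι → B → B)
    (hs_id : ∀ i x, s i i x = x)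
    (hS1 : ∀ i x, x ≤ c i x)
    (hS2 : ∀ i x y, c i (x ⊔ y) = c i x ⊔ c i y)
    (hS3 : ∀ i j x, s i j (c i x) = c i x)
    (hS4 : ∀ i j x, i ≠ j → c i (s i j x) = s i j x)
    (hS5 : ∀ i j k m x, i ≠ k → i ≠ m → j ≠ k → j ≠ m →
      s i j (s k m x) = s k m (s i j x))
    (hS6sup : ∀ i j x y, s i j (x ⊔ y) = s i j x ⊔ s i j y)
    (hS6compl : ∀ i j x, s i j (xᶜ) = (s i j x)ᶜ)
    (hS7 : ∀ i j k x, s k k (s j k x) = s k i (s j i x))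
    (hS8 : ∀ i j m k x, k ≠ i → k ≠ j → k ≠ m → m ≠ i → m ≠ j →
      s k i (s i j (s j m (s m k (c k x)))) =
      s k m (s m i (s i j (s j k (c k x)))))
    (hsInf : ∀ (i j : ι) (Y : Set B), s i j (sInf Y) = ⨅ y ∈ Y, s i j y) :
    ∀ (i j : ι) (x : B), i ≠ j →
      sInf {y : B | s i j y = ⊤} ⊓ c i (sInf {y : B | s i j y = ⊤} ⊓ x) ≤ x :=
  stmt10_general c s hS2 hS3 hS4 hS6sup hS6compl
end

section
/- Every transposition algebra TA_α embeds into the transposition reduct of a transposition equality algebra TEA_α. Concretely: if A ∈ TA_α, then its canonical (perfect) extension B (which exists since TA_α is axiomatized by positive equations and hence canonical) carries diagonal constants d_ij := inf { y ∈ B : s^i_j y = 1 } making B a TEA_α, and A embeds into the reduct of B omitting the diagonals. -/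
/-!
The canonical extension of `A` is the powerset of its ultrafilters. The Boolean endomorphisms
`s^i_j` and `s_{ij}` dualize to maps on ultrafilters and extend by inverse image, and each additive
`c_i` extends through its dual relation. The equational axioms carry over because they hold for the
underlying homomorphisms, and (F4) carries over because `c_i`-related ultrafilters agree on the
range of `s^i_j`. Taking `d_ij` to be the fixed points of the dual of the idempotent `s^i_j` gives
(Fe10) and (Fe11), and in any TEA these two axioms make `d_ij` the least `y` with `s^i_j y = 1`.
The Stone map `a ↦ {U | a ∈ U}` is the embedding; it commutes with `c_i` by the prime ideal theorem.
-/

/-- A transposition equality algebra `TEA`: a Boolean algebra with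
cylindrifications `c i`, substitutions `s i j` (for `s^i_j`), transpositions
`t i j` (for `s_{ij}`) and diagonal constants `d i j`, satisfying axioms
(Fe0)–(Fe11) of Ferenczi. The index set `ι` may be arbitrary (e.g. an ordinal `α`). -/
structure TEA (A : Type*) [BooleanAlgebra A] (ι : Type*) where
  c : ι → A → A
  s : ι → ι → A → A
  t : ι → ι → A → A
  d : ι → ι → A
  s_id : ∀ i x, s i i x = x
  t_id : ∀ i x, t i i x = x
  d_id : ∀ i, d i i = ⊤
  t_symm : ∀ i j x, t i j x = t j i x
  fe1 : ∀ i x, x ≤ c i x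
  fe2 : ∀ i x y, c i (x ⊔ y) = c i x ⊔ c i y
  fe3 : ∀ i j x, s i j (c i x) = c i x
  fe4 : ∀ i j x, i ≠ j → c i (s i j x) = s i j x
  fe5 : ∀ i j k m x, i ≠ k → i ≠ m → j ≠ k → j ≠ m →
    s i j (s k m x) = s k m (s i j x)
  fe6s_sup : ∀ i j x y, s i j (x ⊔ y) = s i j x ⊔ s i j y
  fe6s_compl : ∀ i j x, s i j (xᶜ) = (s i j x)ᶜ
  fe6t_sup : ∀ i j x y, t i j (x ⊔ y) = t i j x ⊔ t i j y
  fe6t_compl : ∀ i j x, t i j (xᶜ) = (t i j x)ᶜ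
  fe7 : ∀ i j x, t i j (t i j x) = x
  fe8 : ∀ i j k x, i ≠ j → j ≠ k → i ≠ k → t i j (t i k x) = t j k (t i j x)
  fe9 : ∀ i j x, t i j (s i j x) = s j i x
  fe10 : ∀ i j, s i j (d i j) = ⊤
  fe11 : ∀ i j x, x ⊓ d i j ≤ s i j x
/-- A transposition algebra `TA`: the diagonal-free version of `TEA`,
with axioms (F0)–(F9). -/
structure TA (A : Type*) [BooleanAlgebra A] (ι : Type*) where
  c : ι → A → A
  s : ι → ι → A → A
  t : ι → ι → A → A
  s_id : ∀ i x, s i i x = x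
  t_id : ∀ i x, t i i x = x
  t_symm : ∀ i j x, t i j x = t j i x
  f1 : ∀ i x, x ≤ c i x
  f2 : ∀ i x y, c i (x ⊔ y) = c i x ⊔ c i y
  f3 : ∀ i j x, s i j (c i x) = c i x
  f4 : ∀ i j x, i ≠ j → c i (s i j x) = s i j x
  f5 : ∀ i j k m x, i ≠ k → i ≠ m → j ≠ k → j ≠ m →
    s i j (s k m x) = s k m (s i j x)
  f6s_sup : ∀ i j x y, s i j (x ⊔ y) = s i j x ⊔ s i j y
  f6s_compl : ∀ i j x, s i j (xᶜ) = (s i j x)ᶜ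
  f6t_sup : ∀ i j x y, t i j (x ⊔ y) = t i j x ⊔ t i j y
  f6t_compl : ∀ i j x, t i j (xᶜ) = (t i j x)ᶜ
  f7 : ∀ i j x, t i j (t i j x) = x
  f8 : ∀ i j k x, i ≠ j → j ≠ k → i ≠ k → t i j (t i k x) = t j k (t i j x)
  f9 : ∀ i j x, t i j (s i j x) = s j i x

universe u v

universe w

section StoneRepresentation

variable {A : Type*} [BooleanAlgebra A]

def BoundedLatticeHom.ofMapSupCompl {B : Type*} [BooleanAlgebra B] (f : A → B)
    (map_sup : ∀ x y, f (x ⊔ y) = f x ⊔ f y) (map_compl : ∀ x, f xᶜ = (f x)ᶜ) :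
    BoundedLatticeHom A B where
  toFun := f
  map_sup' := map_sup
  map_inf' x y := by
    rw [← compl_compl (x ⊓ y), compl_inf, map_compl, map_sup, map_compl, map_compl, compl_sup,
      compl_compl, compl_compl]
  map_top' := by rw [← sup_compl_eq_top (x := (⊥ : A)), map_sup, map_compl, sup_compl_eq_top]
  map_bot' := by
    rw [← compl_top, map_compl, compl_eq_bot, ← sup_compl_eq_top (x := (⊥ : A)), map_sup,
      map_compl, sup_compl_eq_top]

theorem BoundedLatticeHom.exists_propHom_of_notMem {I : Order.Ideal A} {a : A} (ha : a ∉ I) :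
    ∃ U : BoundedLatticeHom A Prop, U a ∧ ∀ b ∈ I, ¬ U b := by
  have hdisj : Disjoint (Order.PFilter.principal a : Set A) I :=
    Set.disjoint_left.2 fun b hab hb => ha (I.lower hab hb)
  obtain ⟨J, hJ, hIJ, hJa⟩ := DistribLattice.prime_ideal_of_disjoint_filter_ideal hdisj
  refine ⟨{ toFun := (· ∉ J), map_sup' := ?_, map_inf' := ?_, map_top' := ?_, map_bot' := ?_ },
    Set.disjoint_left.1 hJa (Order.PFilter.mem_principal.2 le_rfl), fun b hb => not_not.2 (hIJ hb)⟩
  · intro x y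
    simp only [sup_Prop_eq, Order.Ideal.sup_mem_iff, not_and_or]
  · intro x y
    simp only [inf_Prop_eq, eq_iff_iff]
    exact ⟨fun h => ⟨fun hx => h (J.lower inf_le_left hx), fun hy => h (J.lower inf_le_right hy)⟩,
      fun h hxy => (hJ.mem_or_mem hxy).elim h.1 h.2⟩
  · simpa using hJ.top_notMem
  · simp

theorem BoundedLatticeHom.exists_propHom_of_not_le {a b : A} (h : ¬ a ≤ b) :
    ∃ U : BoundedLatticeHom A Prop, U a ∧ ¬ U b :=
  (exists_propHom_of_notMem (I := Order.Ideal.principal b) (mt Order.Ideal.mem_principal.1 h)).imp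
    fun _ hU => ⟨hU.1, hU.2 b Order.Ideal.mem_principal_self⟩

theorem BoundedLatticeHom.exists_propHom_of_map_sup {f : A → A} (hf : ∀ x y, f (x ⊔ y) = f x ⊔ f y)
    {V : BoundedLatticeHom A Prop} {a : A} (ha : V (f a)) (hbot : ¬ V (f ⊥)) :
    ∃ U : BoundedLatticeHom A Prop, U a ∧ ∀ b, U b → V (f b) := by
  let I : Order.Ideal A :=
    { carrier := {b | ¬ V (f b)}
      lower' := fun b c hcb hb hc => hb (OrderHomClass.mono V (Monotone.of_map_sup hf hcb) hc)
      nonempty' := ⟨⊥, hbot⟩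
      directed' := fun b hb c hc => ⟨b ⊔ c, by simp_all, le_sup_left, le_sup_right⟩ }
  obtain ⟨U, hUa, hU⟩ := exists_propHom_of_notMem (I := I) (not_not.2 ha)
  exact ⟨U, hUa, fun b hb => by_contra fun h => hU b h hb⟩

/-- Ultrafilters of `A`, as homomorphisms to `Prop`, lifted to an arbitrary universe above `A`'s. -/
abbrev StonePoint (A : Type*) [BooleanAlgebra A] := ULift.{w} (BoundedLatticeHom A Prop)

namespace StonePoint

noncomputable def comap (h : BoundedLatticeHom A A) (U : StonePoint.{w} A) : StonePoint.{w} A :=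
  ⟨U.down.comp h⟩

@[simp]
theorem comap_apply (h : BoundedLatticeHom A A) (U : StonePoint.{w} A) (a : A) :
    (comap h U).down a = U.down (h a) := rfl

theorem preimage_comap_congr {g h : BoundedLatticeHom A A} (H : ∀ a, g a = h a)
    (S : Set (StonePoint.{w} A)) : comap g ⁻¹' S = comap h ⁻¹' S := by
  rw [BoundedLatticeHom.ext H]

theorem preimage_comap_comap_congr {g h g' h' : BoundedLatticeHom A A}
    (H : ∀ a, g (h a) = g' (h' a)) (S : Set (StonePoint.{w} A)) :
    comap g ⁻¹' (comap h ⁻¹' S) = comap g' ⁻¹' (comap h' ⁻¹' S) :=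
  preimage_comap_congr (g := g.comp h) (h := g'.comp h') H S

def dualRel (f : A → A) (U V : StonePoint.{w} A) : Prop := ∀ a, U.down a → V.down (f a)

/-- The canonical extension of an additive operator `f`; the second disjunct is needed because
(F0)–(F9) force `c i ⊥ = ⊥` only when `ι` has at least two elements. -/
def diamond (f : A → A) (S : Set (StonePoint.{w} A)) : Set (StonePoint.{w} A) :=
  {V | (∃ U ∈ S, dualRel f U V) ∨ V.down (f ⊥)}

theorem subset_diamond {f : A → A} (hf : ∀ a, a ≤ f a) (S : Set (StonePoint.{w} A)) :
    S ⊆ diamond f S :=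
  fun U hU => Or.inl ⟨U, hU, fun a ha => OrderHomClass.mono U.down (hf a) ha⟩

theorem diamond_union (f : A → A) (S S' : Set (StonePoint.{w} A)) :
    diamond f (S ∪ S') = diamond f S ∪ diamond f S' := by
  ext V
  simp only [diamond, Set.mem_union, Set.mem_ofPred_eq, or_and_right, exists_or]
  exact or_or_distrib_right

def embed (a : A) : Set (StonePoint.{w} A) := {U | U.down a}

theorem embed_injective : Function.Injective (embed : A → Set (StonePoint.{w} A)) := by
  have key : ∀ a b : A, (embed a : Set (StonePoint.{w} A)) = embed b → a ≤ b := fun a b hab => by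
    by_contra h
    obtain ⟨U, hUa, hUb⟩ := BoundedLatticeHom.exists_propHom_of_not_le h
    exact hUb (show ULift.up.{w} U ∈ embed b from hab ▸ hUa)
  exact fun a b hab => le_antisymm (key a b hab) (key b a hab.symm)

theorem embed_sup (a b : A) : embed.{w} (a ⊔ b) = embed a ⊔ embed b := by
  ext U
  simp [embed]

theorem embed_compl (a : A) : embed.{w} aᶜ = (embed a)ᶜ := by
  ext U
  simp [embed]

theorem embed_map (h : BoundedLatticeHom A A) (a : A) : embed.{w} (h a) = comap h ⁻¹' embed a :=
  rfl

theorem embed_map_sup {f : A → A} (hf : ∀ x y, f (x ⊔ y) = f x ⊔ f y) (a : A) :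
    embed.{w} (f a) = diamond f (embed a) := by
  ext V
  refine ⟨fun hV => ?_, ?_⟩
  · by_cases hbot : V.down (f ⊥)
    · exact Or.inr hbot
    obtain ⟨U, hUa, hU⟩ := BoundedLatticeHom.exists_propHom_of_map_sup hf hV hbot
    exact Or.inl ⟨⟨U⟩, hUa, hU⟩
  · rintro (⟨U, hUa, hUV⟩ | hbot)
    · exact hUV a hUa
    · exact OrderHomClass.mono V.down (Monotone.of_map_sup hf bot_le) hbot

end StonePoint

end StoneRepresentation

theorem TEA.isLeast_d {B ι : Type*} [BooleanAlgebra B] (E : TEA B ι) (i j : ι) :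
    IsLeast {y : B | E.s i j y = ⊤} (E.d i j) := by
  refine ⟨E.fe10 i j, fun y (hy : E.s i j y = ⊤) => ?_⟩
  have h := E.fe11 i j yᶜ
  rw [E.fe6s_compl, hy, compl_top, le_bot_iff, inf_comm] at h
  exact disjoint_compl_right_iff.1 (disjoint_iff.2 h)

namespace TA

variable {A : Type*} [BooleanAlgebra A] {ι : Type*} (T : TA A ι)

theorem s_s_self (i j : ι) (x : A) : T.s i j (T.s i j x) = T.s i j x := by
  rcases eq_or_ne i j with rfl | hij
  · rw [T.s_id, T.s_id]
  · rw [← T.f4 i j x hij, T.f3]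

def sHom (i j : ι) : BoundedLatticeHom A A :=
  .ofMapSupCompl (T.s i j) (T.f6s_sup i j) (T.f6s_compl i j)

def tHom (i j : ι) : BoundedLatticeHom A A :=
  .ofMapSupCompl (T.t i j) (T.f6t_sup i j) (T.f6t_compl i j)

@[simp]
theorem sHom_apply (i j : ι) (x : A) : T.sHom i j x = T.s i j x := rfl

theorem c_bot {i j : ι} (hij : i ≠ j) : T.c i ⊥ = ⊥ := by
  have hs : T.s i j ⊥ = ⊥ := map_bot (T.sHom i j)
  rw [← hs, T.f4 i j ⊥ hij]

open StonePoint

-- The dual form of (F4).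
theorem comap_sHom_eq_of_rel {i j : ι} (hij : i ≠ j) {U V : StonePoint.{w} A}
    (hUV : dualRel (T.c i) U V) : comap (T.sHom i j) V = comap (T.sHom i j) U := by
  ext1; ext a
  simp only [comap_apply, sHom_apply]
  refine ⟨fun hV => by_contra fun hU => ?_, fun hU => T.f4 i j a hij ▸ hUV _ hU⟩
  have hUc : U.down (T.s i j aᶜ) := by
    rw [T.f6s_compl, map_compl']
    exact hU
  have := T.f4 i j aᶜ hij ▸ hUV _ hUc
  rw [T.f6s_compl, map_compl'] at this
  exact this hV

noncomputable def canonicalExtension : TEA (Set (StonePoint.{w} A)) ι where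
  c i := diamond (T.c i)
  s i j S := comap (T.sHom i j) ⁻¹' S
  t i j S := comap (T.tHom i j) ⁻¹' S
  d i j := {U | comap (T.sHom i j) U = U}
  s_id i := preimage_comap_congr (h := .id A) (T.s_id i)
  t_id i := preimage_comap_congr (h := .id A) (T.t_id i)
  d_id i := Set.eq_univ_of_forall fun U => by
    ext1; ext x
    simp [T.s_id]
  t_symm i j := preimage_comap_congr (T.t_symm i j)
  fe1 i := subset_diamond (T.f1 i)
  fe2 i := diamond_union (T.c i)
  fe3 i j S := by
    ext V
    simp [diamond, dualRel, T.f3]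
  fe4 i j S hij := by
    refine (subset_diamond (T.f1 i) _).antisymm' ?_
    rintro V (⟨U, hU, hUV⟩ | hbot)
    · rwa [Set.mem_preimage, T.comap_sHom_eq_of_rel hij hUV]
    · rw [T.c_bot hij] at hbot
      exact absurd hbot (by simp)
  fe5 i j k m S hik him hjk hjm :=
    preimage_comap_comap_congr (fun x => T.f5 i j k m x hik him hjk hjm) S
  fe6s_sup _ _ _ _ := rfl
  fe6s_compl _ _ _ := rfl
  fe6t_sup _ _ _ _ := rfl
  fe6t_compl _ _ _ := rfl
  fe7 i j := preimage_comap_congr (g := (T.tHom i j).comp (T.tHom i j)) (h := .id A) (T.f7 i j)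
  fe8 i j k S hij hjk hik := preimage_comap_comap_congr (fun x => T.f8 i j k x hij hjk hik) S
  fe9 i j := preimage_comap_congr (g := (T.tHom i j).comp (T.sHom i j)) (T.f9 i j)
  fe10 i j := Set.eq_univ_of_forall fun U => by
    ext1; ext x
    simp [T.s_s_self]
  fe11 i j S := fun U ⟨hU, hfix⟩ => by
    rwa [Set.mem_preimage, hfix]

end TA

/-- Every transposition algebra `TA_α` embeds into the
transposition reduct of a transposition equality algebra `TEA_α`: there is a
complete atomic Boolean algebra `B` carrying a `TEA` structure whose
diagonals are `d i j = sInf {y | s^i_j y = ⊤}`, and an injective Boolean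
embedding of `A` into `B` preserving cylindrifications, substitutions and
transpositions (i.e. into the reduct of `B` omitting the diagonals). -/
theorem stmt14 {A : Type u} [BooleanAlgebra A] {ι : Type v} (T : TA A ι) :
    ∃ (B : Type (max u v)) (_ : CompleteBooleanAlgebra B) (_ : IsAtomic B)
      (E : TEA B ι),
      (∀ i j : ι, E.d i j = sInf {y : B | E.s i j y = ⊤}) ∧
      ∃ f : A → B, Function.Injective f ∧
        (∀ x y : A, f (x ⊔ y) = f x ⊔ f y) ∧
        (∀ x : A, f (xᶜ) = (f x)ᶜ) ∧
        (∀ (i : ι) (x : A), f (T.c i x) = E.c i (f x)) ∧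
        (∀ (i j : ι) (x : A), f (T.s i j x) = E.s i j (f x)) ∧
        (∀ (i j : ι) (x : A), f (T.t i j x) = E.t i j (f x)) := by
  refine ⟨Set (StonePoint.{v} A), inferInstance, inferInstance, T.canonicalExtension,
    fun i j => (T.canonicalExtension.isLeast_d i j).isGLB.sInf_eq.symm, StonePoint.embed,
    StonePoint.embed_injective, StonePoint.embed_sup, StonePoint.embed_compl,
    fun i => StonePoint.embed_map_sup (T.f2 i), fun i j => StonePoint.embed_map (T.sHom i j),
    fun i j => StonePoint.embed_map (T.tHom i j)⟩
end

section
/- Let V ⊆ ᵅU satisfy S^i_j V = V for all i,j < α, i.e., for every y ∈ V and i,j there exists u with y^i_u ∈ V and y^i_{y_j} ∈ V (the class D_α condition). Then the powerset relativized cylindric set algebra on V satisfies axioms (C0)–(C3), (C4)*, (C5)–(C7) and the merry-go-round identities, i.e., it is a partial transposition algebra PTA_α. -/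
/-!
The `D_α` condition makes `V` closed under the substitutions `y ↦ y ∘ [i/j]`, where
`[i/j] = update id i j`.  Hence, on `V`, the operator `S^i_j` with `i ≠ j` is just
precomposition with `[i/j]`, and both sides of a merry-go-round identity become
`V ∩ {y | y ∘ τ ∈ C}` for `C = {y | ∃ u, y^k_u ∈ X}` and two composites `τ` of substitutions.
The two composites cycle `i ↦ j ↦ m ↦ i` in the same way and differ only at `k`, whose value
`C` ignores.  The axioms (C4)* and (C6) use the `D_α` condition in the same way, to stay inside `V`.
-/

open Function Set

variable {α U : Type*} [DecidableEq α]

/-- Relativized cylindrification on subsets of `V`. -/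
def Cyl (V : Set (α → U)) (i : α) (X : Set (α → U)) : Set (α → U) :=
  {y | y ∈ V ∧ ∃ u, Function.update y i u ∈ X}

/-- Relativized diagonal element. -/
def Diag (V : Set (α → U)) (i j : α) : Set (α → U) := {y | y ∈ V ∧ y i = y j}

/-- The substitution operator `S^i_j X = C_i (D_{ij} ∩ X)`. -/
def Srel (V : Set (α → U)) (i j : α) (X : Set (α → U)) : Set (α → U) :=
  Cyl V i (Diag V i j ∩ X)

section ClosureOperators

variable {V X Y : Set (α → U)} {i : α}

theorem subset_cyl (hX : X ⊆ V) : X ⊆ Cyl V i X :=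
  fun y hy => ⟨hX hy, y i, by rwa [update_eq_self]⟩

theorem cyl_union : Cyl V i (X ∪ Y) = Cyl V i X ∪ Cyl V i Y := by
  ext y
  simp only [Cyl, mem_ofPred_eq, mem_union, exists_or, and_or_left]

theorem cyl_empty : Cyl V i (∅ : Set (α → U)) = ∅ := by
  ext y
  simp [Cyl]

theorem cyl_cyl (hX : X ⊆ V) : Cyl V i (Cyl V i X) = Cyl V i X := by
  ext y
  constructor
  · rintro ⟨hy, _, _, v, hv⟩
    exact ⟨hy, v, by rwa [update_idem] at hv⟩
  · rintro ⟨hy, u, hu⟩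
    exact ⟨hy, u, hX hu, u, by rwa [update_idem]⟩

theorem cyl_inter_cyl (hX : X ⊆ V) : Cyl V i (X ∩ Cyl V i Y) = Cyl V i X ∩ Cyl V i Y := by
  ext y
  constructor
  · rintro ⟨hy, u, hu, -, v, hv⟩
    exact ⟨⟨hy, u, hu⟩, hy, v, by rwa [update_idem] at hv⟩
  · rintro ⟨⟨hy, u, hu⟩, -, v, hv⟩
    exact ⟨hy, u, hu, hX hu, v, by rwa [update_idem]⟩

end ClosureOperators

section Diagonals

variable {V X : Set (α → U)} {i j k : α}

omit [DecidableEq α] in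
theorem diag_self : Diag V i i = V := by
  ext y
  simp [Diag]

theorem update_mem_diag_iff (hij : i ≠ j) {y : α → U} {u : U} :
    update y i u ∈ Diag V i j ↔ update y i u ∈ V ∧ u = y j := by
  simp [Diag, update_of_ne hij.symm]

theorem diag_inter_cyl_diag_inter_subset (hij : i ≠ j) :
    Diag V i j ∩ Cyl V i (Diag V i j ∩ X) ⊆ X := by
  rintro y ⟨⟨-, hd⟩, -, u, hu, hx⟩
  obtain rfl := ((update_mem_diag_iff hij).1 hu).2
  rwa [← hd, update_eq_self] at hx

theorem diag_eq_cyl_diag_inter_diag (hV : ∀ y ∈ V, ∀ i j : α, update y i (y j) ∈ V)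
    (hki : k ≠ i) (hkj : k ≠ j) : Diag V i j = Cyl V k (Diag V i k ∩ Diag V k j) := by
  ext y
  constructor
  · rintro ⟨hy, hd⟩
    refine ⟨hy, y i, ⟨hV y hy k i, ?_⟩, hV y hy k i, ?_⟩ <;>
      simp [update_of_ne hki.symm, update_of_ne hkj.symm, hd]
  · rintro ⟨hy, u, ⟨-, h1⟩, -, h2⟩
    simp only [update_self, update_of_ne hki.symm, update_of_ne hkj.symm] at h1 h2
    exact ⟨hy, h1.trans h2⟩

theorem diag_inter_cyl_cyl_subset (hV : ∀ y ∈ V, ∀ i j : α, update y i (y j) ∈ V)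
    (hX : X ⊆ V) (hki : k ≠ i) (hkj : k ≠ j) :
    Diag V j k ∩ Cyl V j (Cyl V i X) ⊆ Cyl V i (Cyl V j X) := by
  rcases eq_or_ne i j with rfl | hij
  · exact inter_subset_right
  rintro y ⟨⟨hy, hd⟩, -, u, -, v, hz⟩
  have hzy : update (update (update y j u) i v) j (y k) = update y i v := by
    rw [update_comm hij.symm, update_idem, ← hd, ← update_of_ne hij.symm v y, update_eq_self]
  refine ⟨hy, v, ?_, u, by rwa [update_comm hij]⟩
  have hzV := hV _ (hX hz) j k
  rwa [update_of_ne hki, update_of_ne hkj, hzy] at hzV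

end Diagonals

section Substitutions

variable {V X : Set (α → U)} {i j k : α}

theorem srel_self (hX : X ⊆ V) : Srel V i i X = Cyl V i X := by
  rw [Srel, diag_self, inter_eq_right.2 hX]

theorem cyl_srel : Cyl V i (Srel V i j X) = Srel V i j X :=
  cyl_cyl (inter_subset_left.trans fun _ h => h.1)

theorem srel_eq_inter_preimage (hV : ∀ y ∈ V, ∀ i j : α, update y i (y j) ∈ V)
    (hij : i ≠ j) : Srel V i j X = V ∩ (fun y => update y i (y j)) ⁻¹' X := by
  ext y
  constructor
  · rintro ⟨hy, u, hu, hx⟩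
    obtain rfl := ((update_mem_diag_iff hij).1 hu).2
    exact ⟨hy, hx⟩
  · rintro ⟨hy, hx⟩
    exact ⟨hy, y j, (update_mem_diag_iff hij).2 ⟨hV y hy i j, rfl⟩, hx⟩

theorem srel_inter_preimage_comp (hV : ∀ y ∈ V, ∀ i j : α, update y i (y j) ∈ V)
    (hij : i ≠ j) (σ : α → α) (W : Set (α → U)) :
    Srel V i j (V ∩ (· ∘ σ) ⁻¹' W) = V ∩ (· ∘ (update id i j ∘ σ)) ⁻¹' W := by
  ext y
  rw [srel_eq_inter_preimage hV hij]
  simp only [mem_inter_iff, mem_preimage, ← comp_assoc, comp_update, comp_id]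
  exact ⟨fun ⟨hy, _, h⟩ => ⟨hy, h⟩, fun ⟨hy, h⟩ => ⟨hy, hV y hy i j, h⟩⟩

theorem cyl_eq_inter_preimage_id : Cyl V k X = V ∩ (· ∘ id) ⁻¹' {y | ∃ u, update y k u ∈ X} :=
  rfl

theorem inter_preimage_comp_cylinder_congr {τ τ' : α → α} (h : ∀ a, a ≠ k → τ a = τ' a) :
    V ∩ (· ∘ τ) ⁻¹' {y : α → U | ∃ u, update y k u ∈ X} =
      V ∩ (· ∘ τ') ⁻¹' {y | ∃ u, update y k u ∈ X} := by
  have hτ : τ = update τ' k (τ k) := by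
    funext a
    rcases eq_or_ne a k with rfl | ha
    · rw [update_self]
    · rw [update_of_ne ha, h a ha]
  ext y
  simp only [mem_inter_iff, mem_preimage, mem_ofPred_eq]
  rw [hτ, comp_update]
  simp only [update_idem]

theorem srel_merry_go_round (hV : ∀ y ∈ V, ∀ i j : α, update y i (y j) ∈ V)
    {m : α} (hki : k ≠ i) (hkj : k ≠ j) (hkm : k ≠ m) (hmi : m ≠ i) (hmj : m ≠ j) :
    Srel V k i (Srel V i j (Srel V j m (Srel V m k (Cyl V k X)))) =
      Srel V k m (Srel V m i (Srel V i j (Srel V j k (Cyl V k X)))) := by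
  rcases eq_or_ne i j with rfl | hij
  · rw [srel_self fun _ h => h.1, srel_self fun _ h => h.1, cyl_srel, cyl_srel]
    simp only [cyl_eq_inter_preimage_id, srel_inter_preimage_comp hV, hki, hkm, hmi,
      hki.symm, hkm.symm, hmi.symm, ne_eq, not_false_eq_true]
    refine inter_preimage_comp_cylinder_congr fun a ha => ?_
    simp only [comp_apply, update_apply, id]
    split_ifs <;> simp_all
  · simp only [cyl_eq_inter_preimage_id, srel_inter_preimage_comp hV, hki, hkm, hmi, hij,
      hkj.symm, hkm.symm, hmj.symm, ne_eq, not_false_eq_true]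
    refine inter_preimage_comp_cylinder_congr fun a ha => ?_
    simp only [comp_apply, update_apply, id]
    split_ifs <;> simp_all

end Substitutions

/-- Let `V ⊆ ᵅU` satisfy the `D_α` condition `S^i_j V = V`,
i.e. for every `y ∈ V` and `i, j`, the sequence `y^i_{y j}` is in `V`.  Then
the powerset relativized cylindric set algebra on `V` satisfies axioms
(C0)–(C3), (C4)*, (C5)–(C7) and the merry-go-round identities: it is a
partial transposition algebra `PTA_α`. -/
theorem stmt16 (V : Set (α → U))
    (hV : ∀ y ∈ V, ∀ i j : α, Function.update y i (y j) ∈ V) :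
    ∀ X Y : Set (α → U), X ⊆ V → Y ⊆ V → ∀ i j k m : α,
      -- (C0)–(C3): additive closure operators, closed under complement
      (X ⊆ Cyl V i X) ∧
      (Cyl V i (X ∪ Y) = Cyl V i X ∪ Cyl V i Y) ∧
      (Cyl V i (∅ : Set (α → U)) = ∅) ∧
      (Cyl V i (Cyl V i X) = Cyl V i X) ∧
      (Cyl V i (X ∩ Cyl V i Y) = Cyl V i X ∩ Cyl V i Y) ∧
      -- (C4)*
      (k ≠ i → k ≠ j → Diag V j k ∩ Cyl V j (Cyl V i X) ⊆ Cyl V i (Cyl V j X)) ∧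
      -- (C5)
      (Diag V i i = V) ∧
      -- (C6)
      (k ≠ i → k ≠ j → Diag V i j = Cyl V k (Diag V i k ∩ Diag V k j)) ∧
      -- (C7)
      (i ≠ j → Diag V i j ∩ Cyl V i (Diag V i j ∩ X) ⊆ X) ∧
      -- (MGR)
      (k ≠ i → k ≠ j → k ≠ m → m ≠ i → m ≠ j →
        Srel V k i (Srel V i j (Srel V j m (Srel V m k (Cyl V k X)))) =
          Srel V k m (Srel V m i (Srel V i j (Srel V j k (Cyl V k X))))) := by
  intro X Y hX _ i j k m
  exact ⟨subset_cyl hX, cyl_union, cyl_empty, cyl_cyl hX, cyl_inter_cyl hX,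
    diag_inter_cyl_cyl_subset hV hX, diag_self, diag_eq_cyl_diag_inter_diag hV,
    diag_inter_cyl_diag_inter_subset, srel_merry_go_round hV⟩
end
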